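/- Let Y = (Y_1, …, Y_N) be independent Poisson with means μ_{0i} > 0 and ŷ_i : ℕ^N → [c, C], 0 < c ≤ C. Then E[∑_i (Y_i − μ_{0i}) log ŷ_i(Y)] = E[∑_i Y_i (log ŷ_i(Y) − log ŷ_i(Y^{(Y_i−1)}))]. -/

import Mathlib

open scoped BigOperators

noncomputable def poissonPMF (μ : ℝ) (k : ℕ) : ℝ :=
  Real.exp (-μ) * μ ^ k / (Nat.factorial k)

noncomputable def poissonWeight {N : ℕ} (μ : Fin N → ℝ) (y : Fin N → ℕ) : ℝ :=
  ∏ i, poissonPMF (μ i) (y i)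

/-!
Write `w` for the product Poisson weight and `eᵢ` for the `i`-th unit vector. The shift
`y ↦ y + eᵢ` is injective with range `{y | yᵢ ≠ 0}`, and `(yᵢ + 1) w(y + eᵢ) = μᵢ w(y)`, so
reindexing gives the Stein–Chen identity `∑ yᵢ h(y - eᵢ) w(y) = μᵢ ∑ h(y) w(y)` for every `h`.
With `h = log ŷᵢ`, which is bounded because `c ≤ ŷᵢ ≤ C`, both sides of the theorem become
`∑ᵢ (E[Yᵢ log ŷᵢ(Y)] - μᵢ E[log ŷᵢ(Y)])`; all series converge absolutely since `E[Yᵢ] < ∞`.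
-/

open Function Finset

lemma summable_mul_of_abs_le {α : Type*} {u g : α → ℝ} (hu : Summable u) (hu0 : ∀ x, 0 ≤ u x)
    {M : ℝ} (hg : ∀ x, |g x| ≤ M) : Summable fun x => g x * u x :=
  (hu.mul_left M).of_norm_bounded fun x => by
    rw [norm_mul, Real.norm_eq_abs, Real.norm_of_nonneg (hu0 x)]
    exact mul_le_mul_of_nonneg_right (hg x) (hu0 x)

lemma summable_prod_apply_of_nonneg {ι : Type*} [Fintype ι] {κ : ι → Type*}
    {f : ∀ i, κ i → ℝ} (hf : ∀ i, Summable (f i)) (hf0 : ∀ i k, 0 ≤ f i k) :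
    Summable fun y : ∀ i, κ i => ∏ i, f i (y i) := by
  classical
  refine summable_of_sum_le (c := ∏ i, ∑' k, f i k)
    (fun y => prod_nonneg fun i _ => hf0 i (y i)) fun s => ?_
  let t : ∀ i, Finset (κ i) := fun i => s.image (· i)
  have hst : s ⊆ Fintype.piFinset t := fun y hy =>
    Fintype.mem_piFinset.2 fun i => mem_image_of_mem _ hy
  calc ∑ y ∈ s, ∏ i, f i (y i)
      ≤ ∑ y ∈ Fintype.piFinset t, ∏ i, f i (y i) :=
        sum_le_sum_of_subset_of_nonneg hst fun y _ _ => prod_nonneg fun i _ => hf0 i (y i)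
    _ = ∏ i, ∑ k ∈ t i, f i k := (prod_univ_sum t f).symm
    _ ≤ ∏ i, ∑' k, f i k :=
        prod_le_prod (fun i _ => sum_nonneg fun k _ => hf0 i k)
          fun i _ => (hf i).sum_le_tsum _ fun k _ => hf0 i k

lemma poissonPMF_nonneg {μ : ℝ} (hμ : 0 ≤ μ) (k : ℕ) : 0 ≤ poissonPMF μ k := by
  unfold poissonPMF
  positivity

lemma summable_poissonPMF (μ : ℝ) : Summable (poissonPMF μ) :=
  ((Real.summable_pow_div_factorial μ).mul_left (Real.exp (-μ))).congr fun _ =>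
    (mul_div_assoc _ _ _).symm

lemma poissonPMF_succ (μ : ℝ) (k : ℕ) :
    ((k : ℝ) + 1) * poissonPMF μ (k + 1) = μ * poissonPMF μ k := by
  simp only [poissonPMF, Nat.factorial_succ, Nat.cast_mul, Nat.cast_succ, pow_succ]
  field_simp

section poissonWeight

variable {N : ℕ} (μ : Fin N → ℝ)

lemma poissonWeight_nonneg (hμ : ∀ i, 0 ≤ μ i) (y : Fin N → ℕ) : 0 ≤ poissonWeight μ y :=
  prod_nonneg fun i _ => poissonPMF_nonneg (hμ i) _

lemma summable_poissonWeight (hμ : ∀ i, 0 ≤ μ i) : Summable (poissonWeight μ) :=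
  summable_prod_apply_of_nonneg (fun i => summable_poissonPMF (μ i))
    fun i => poissonPMF_nonneg (hμ i)

lemma poissonWeight_update_succ (y : Fin N → ℕ) (i : Fin N) :
    ((y i : ℝ) + 1) * poissonWeight μ (update y i (y i + 1)) = μ i * poissonWeight μ y := by
  have hrest : ∏ j ∈ univ.erase i, poissonPMF (μ j) (update y i (y i + 1) j)
      = ∏ j ∈ univ.erase i, poissonPMF (μ j) (y j) :=
    prod_congr rfl fun j hj => by rw [update_of_ne (ne_of_mem_erase hj)]
  unfold poissonWeight
  rw [← mul_prod_erase univ _ (mem_univ i), ← mul_prod_erase univ _ (mem_univ i), hrest,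
    update_self, ← mul_assoc, poissonPMF_succ, mul_assoc]

lemma update_succ_injective (i : Fin N) :
    Injective fun y : Fin N → ℕ => update y i (y i + 1) := by
  intro y z hyz
  have hi : y i = z i := by simpa using congrFun hyz i
  funext j
  rcases eq_or_ne j i with rfl | hj
  · exact hi
  · simpa [update_of_ne hj] using congrFun hyz j

lemma mem_range_update_succ {y : Fin N → ℕ} {i : Fin N} (hy : y i ≠ 0) :
    y ∈ Set.range fun z : Fin N → ℕ => update z i (z i + 1) :=
  ⟨update y i (y i - 1), by simp [Nat.sub_add_cancel (Nat.pos_of_ne_zero hy)]⟩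

lemma hasSum_coord_mul_comp_update_pred_iff (i : Fin N) (h : (Fin N → ℕ) → ℝ) (a : ℝ) :
    HasSum (fun y => (y i : ℝ) * h (update y i (y i - 1)) * poissonWeight μ y) a ↔
      HasSum (fun y => μ i * (h y * poissonWeight μ y)) a := by
  have hcomp : (fun y => (y i : ℝ) * h (update y i (y i - 1)) * poissonWeight μ y) ∘
      (fun y => update y i (y i + 1)) = fun y => μ i * (h y * poissonWeight μ y) := by
    funext y
    simp only [comp_apply, update_self, Nat.add_sub_cancel, update_idem, update_eq_self,
      Nat.cast_succ]
    rw [mul_comm, ← mul_assoc, mul_comm _ ((y i : ℝ) + 1), poissonWeight_update_succ]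
    ring
  rw [← hcomp, (update_succ_injective i).hasSum_iff]
  intro y hy
  by_cases hyi : y i = 0
  -- off the range of the shift `y i = 0`, which kills the term whatever the truncated
  -- `y i - 1` makes of `h`
  · simp [hyi]
  · exact absurd (mem_range_update_succ hyi) hy

lemma summable_coord_mul_poissonWeight (hμ : ∀ i, 0 ≤ μ i) (i : Fin N) :
    Summable fun y => (y i : ℝ) * poissonWeight μ y := by
  simpa using ((hasSum_coord_mul_comp_update_pred_iff μ i (fun _ => 1) _).2
    ((summable_poissonWeight μ hμ).hasSum.mul_left (μ i) |>.congr_fun fun y => by simp)).summable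

variable {μ} {f : (Fin N → ℕ) → ℝ} {M : ℝ}

lemma summable_mul_poissonWeight_of_abs_le (hμ : ∀ i, 0 ≤ μ i) (hf : ∀ y, |f y| ≤ M) :
    Summable fun y => f y * poissonWeight μ y :=
  summable_mul_of_abs_le (summable_poissonWeight μ hμ) (poissonWeight_nonneg μ hμ) hf

lemma summable_mul_coord_mul_poissonWeight_of_abs_le (hμ : ∀ i, 0 ≤ μ i) (i : Fin N)
    (hf : ∀ y, |f y| ≤ M) : Summable fun y => f y * ((y i : ℝ) * poissonWeight μ y) :=
  summable_mul_of_abs_le (summable_coord_mul_poissonWeight μ hμ i)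
    (fun y => mul_nonneg (Nat.cast_nonneg _) (poissonWeight_nonneg μ hμ y)) hf

lemma hasSum_sub_mean_mul_poissonWeight (hμ : ∀ i, 0 ≤ μ i) (i : Fin N)
    (hf : ∀ y, |f y| ≤ M) :
    HasSum (fun y => ((y i : ℝ) - μ i) * f y * poissonWeight μ y)
      (∑' y, f y * ((y i : ℝ) * poissonWeight μ y) - μ i * ∑' y, f y * poissonWeight μ y) :=
  ((summable_mul_coord_mul_poissonWeight_of_abs_le hμ i hf).hasSum.sub
    ((summable_mul_poissonWeight_of_abs_le hμ hf).hasSum.mul_left (μ i))).congr_fun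
    fun y => by ring

lemma hasSum_coord_mul_sub_comp_update_pred (hμ : ∀ i, 0 ≤ μ i) (i : Fin N)
    (hf : ∀ y, |f y| ≤ M) :
    HasSum (fun y => (y i : ℝ) * (f y - f (update y i (y i - 1))) * poissonWeight μ y)
      (∑' y, f y * ((y i : ℝ) * poissonWeight μ y) - μ i * ∑' y, f y * poissonWeight μ y) := by
  have hshift : HasSum (fun y => (y i : ℝ) * f (update y i (y i - 1)) * poissonWeight μ y)
      (μ i * ∑' y, f y * poissonWeight μ y) :=
    (hasSum_coord_mul_comp_update_pred_iff μ i f _).2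
      ((summable_mul_poissonWeight_of_abs_le hμ hf).hasSum.mul_left (μ i))
  exact ((summable_mul_coord_mul_poissonWeight_of_abs_le hμ i hf).hasSum.sub hshift).congr_fun
    fun y => by ring

end poissonWeight

lemma abs_log_le_max_of_mem_Icc {c C x : ℝ} (hc : 0 < c) (hx : x ∈ Set.Icc c C) :
    |Real.log x| ≤ max |Real.log c| |Real.log C| :=
  abs_le.2 ⟨(neg_le_neg (le_max_left _ _)).trans
      ((neg_abs_le _).trans (Real.log_le_log hc hx.1)),
    (Real.log_le_log (hc.trans_le hx.1) hx.2).trans ((le_abs_self _).trans (le_max_right _ _))⟩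

theorem core_identity_general {N : ℕ} (μ₀ : Fin N → ℝ) (hμ : ∀ i, 0 < μ₀ i)
    (yhat : Fin N → (Fin N → ℕ) → ℝ) (c C : ℝ) (hc : 0 < c)
    (hbdd : ∀ i y, c ≤ yhat i y ∧ yhat i y ≤ C) :
    ∑' y : Fin N → ℕ,
        (∑ i, ((y i : ℝ) - μ₀ i) * Real.log (yhat i y)) * poissonWeight μ₀ y
      = ∑' y : Fin N → ℕ,
          (∑ i, (y i : ℝ) * (Real.log (yhat i y)
            - Real.log (yhat i (Function.update y i (y i - 1))))) *
            poissonWeight μ₀ y := by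
  have hμ₀ : ∀ i, 0 ≤ μ₀ i := fun i => (hμ i).le
  have hlog : ∀ i y, |Real.log (yhat i y)| ≤ max |Real.log c| |Real.log C| :=
    fun i y => abs_log_le_max_of_mem_Icc hc (hbdd i y)
  simp_rw [sum_mul]
  rw [(hasSum_sum fun i _ => hasSum_sub_mean_mul_poissonWeight hμ₀ i (hlog i)).tsum_eq,
    (hasSum_sum fun i _ => hasSum_coord_mul_sub_comp_update_pred hμ₀ i (hlog i)).tsum_eq]

theorem core_identity {N : ℕ} (μ₀ : Fin N → ℝ) (hμ : ∀ i, 0 < μ₀ i)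
    (yhat : Fin N → (Fin N → ℕ) → ℝ) (c C : ℝ) (hc : 0 < c) (hcC : c ≤ C)
    (hbdd : ∀ i y, c ≤ yhat i y ∧ yhat i y ≤ C) :
    ∑' y : Fin N → ℕ,
        (∑ i, ((y i : ℝ) - μ₀ i) * Real.log (yhat i y)) * poissonWeight μ₀ y
      = ∑' y : Fin N → ℕ,
          (∑ i, (y i : ℝ) * (Real.log (yhat i y)
            - Real.log (yhat i (Function.update y i (y i - 1))))) *
            poissonWeight μ₀ y :=
  core_identity_general μ₀ hμ yhat c C hc hbdd
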